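/- Let x⁰, x¹, x², … be a PPA sequence for min_{x∈Ω} q(x), and assume inf_{x∈Ω} q(x) > −∞. Then the sequence (x^k) is bounded, i.e. there exists M > 0 with ‖x^k‖ ≤ M for all k. (Theorem 3.5.) -/

import Mathlib

open Matrix Filter Topology

/-- Euclidean norm of a finitely-indexed real vector. -/
noncomputable def vnorm {ι : Type*} [Fintype ι] (v : ι → ℝ) : ℝ :=
  Real.sqrt (v ⬝ᵥ v)

/-- Membership in the (possibly unbounded) box `Ω = {x | l ≤ x ≤ u}`,
with extended-real bounds. -/
def inBox {n : ℕ} (l u : Fin n → EReal) (x : Fin n → ℝ) : Prop :=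
  ∀ j, l j ≤ (x j : EReal) ∧ (x j : EReal) ≤ u j

/-- The quadratic objective `q(x) = ½ xᵀQx + rᵀx`. -/
noncomputable def qf {n : ℕ} (Q : Matrix (Fin n) (Fin n) ℝ) (r : Fin n → ℝ)
    (x : Fin n → ℝ) : ℝ :=
  (1 / 2) * (x ⬝ᵥ Q *ᵥ x) + r ⬝ᵥ x

section vnormKit
variable {ι : Type*} [Fintype ι]

noncomputable def toE {ι : Type*} [Fintype ι] : (ι → ℝ) ≃ₗ[ℝ] EuclideanSpace ℝ ι :=
  (WithLp.linearEquiv 2 ℝ (ι → ℝ)).symm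

@[simp] lemma toE_apply (v : ι → ℝ) (i : ι) : (toE v : EuclideanSpace ℝ ι) i = v i := rfl

lemma vnorm_eq_norm (v : ι → ℝ) : vnorm v = ‖(toE v : EuclideanSpace ℝ ι)‖ := by
  rw [EuclideanSpace.norm_eq]
  unfold vnorm dotProduct
  congr 1
  apply Finset.sum_congr rfl
  intro i _
  simp [Real.norm_eq_abs, sq_abs, sq]

lemma vnorm_nonneg (v : ι → ℝ) : 0 ≤ vnorm v := Real.sqrt_nonneg _

lemma vnorm_triangle (a b : ι → ℝ) : vnorm (a + b) ≤ vnorm a + vnorm b := by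
  rw [vnorm_eq_norm, vnorm_eq_norm, vnorm_eq_norm, map_add]
  exact norm_add_le _ _

lemma vnorm_neg (v : ι → ℝ) : vnorm (-v) = vnorm v := by
  rw [vnorm_eq_norm, vnorm_eq_norm, map_neg, norm_neg]

lemma vnorm_sq (v : ι → ℝ) : vnorm v ^ 2 = v ⬝ᵥ v := by
  unfold vnorm
  rw [Real.sq_sqrt]
  exact Finset.sum_nonneg fun i _ => mul_self_nonneg _

lemma dot_sym (v w : ι → ℝ) : v ⬝ᵥ w = w ⬝ᵥ v := by
  unfold dotProduct; exact Finset.sum_congr rfl fun i _ => mul_comm _ _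

lemma inner_toE (v w : ι → ℝ) :
    (inner ℝ (toE v) (toE w) : ℝ) = v ⬝ᵥ w := by
  rw [PiLp.inner_apply]
  exact Finset.sum_congr rfl fun i _ => by simp [RCLike.inner_apply, mul_comm]

lemma abs_dot_le (v w : ι → ℝ) : |v ⬝ᵥ w| ≤ vnorm v * vnorm w := by
  rw [← inner_toE, vnorm_eq_norm, vnorm_eq_norm]
  exact abs_real_inner_le_norm _ _

lemma vnorm_mono (v w : ι → ℝ) (h : ∀ i, |v i| ≤ |w i|) : vnorm v ≤ vnorm w := by
  unfold vnorm
  apply Real.sqrt_le_sqrt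
  unfold dotProduct
  apply Finset.sum_le_sum
  intro i _
  have := h i
  nlinarith [abs_nonneg (v i), abs_nonneg (w i), sq_abs (v i), sq_abs (w i)]

lemma vnorm_smul (c : ℝ) (v : ι → ℝ) : vnorm (c • v) = |c| * vnorm v := by
  rw [vnorm_eq_norm, vnorm_eq_norm, _root_.map_smul, norm_smul, Real.norm_eq_abs]

end vnormKit

section hoffman
open Submodule Metric
variable {n : ℕ}

/-- Hoffman-type bound for a linear map on Euclidean space. -/
lemma hoffman_E (L : EuclideanSpace ℝ (Fin n) →ₗ[ℝ] EuclideanSpace ℝ (Fin n)) :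
    ∃ τ : ℝ, 0 < τ ∧ ∀ w ∈ LinearMap.range L, ∃ v, L v = w ∧ ‖v‖ ≤ τ * ‖w‖ := by
  classical
  set K := LinearMap.ker L with hK
  set φ : (Kᗮ : Submodule ℝ (EuclideanSpace ℝ (Fin n))) →ₗ[ℝ] EuclideanSpace ℝ (Fin n) :=
    L.comp (Kᗮ.subtype) with hφ
  have hinj : Function.Injective φ := by
    intro a b hab
    have h0 : L ((a : EuclideanSpace ℝ (Fin n)) - b) = 0 := by
      simp only [map_sub]
      simpa [hφ] using sub_eq_zero_of_eq hab
    have hmemK : ((a : EuclideanSpace ℝ (Fin n)) - b) ∈ K := h0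
    have hmemKc : ((a : EuclideanSpace ℝ (Fin n)) - b) ∈ Kᗮ := sub_mem a.2 b.2
    have : ((a : EuclideanSpace ℝ (Fin n)) - b) = 0 := by
      have := Submodule.mem_inf.mpr ⟨hmemK, hmemKc⟩
      rwa [Submodule.inf_orthogonal_eq_bot, Submodule.mem_bot] at this
    exact Subtype.ext (sub_eq_zero.mp this)
  set e := LinearEquiv.ofInjective φ hinj
  set ψ := LinearMap.toContinuousLinearMap (e.symm.toLinearMap)
  refine ⟨‖ψ‖ + 1, by positivity, ?_⟩
  intro w hw
  obtain ⟨v0, hv0⟩ := hw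
  have hcompl : IsCompl K Kᗮ := Submodule.isCompl_orthogonal_of_hasOrthogonalProjection
  obtain ⟨a, b, haK, hbK, hab⟩ := Submodule.codisjoint_iff_exists_add_eq.mp hcompl.codisjoint v0
  have hwrange : w ∈ LinearMap.range φ := by
    refine ⟨⟨b, hbK⟩, ?_⟩
    have h3 : L v0 = L a + L b := by rw [← map_add, hab]
    have hLa : L a = 0 := haK
    simp only [hφ, LinearMap.comp_apply, Submodule.subtype_apply]
    rw [hv0] at h3
    rw [h3, hLa, zero_add]
  set wr : LinearMap.range φ := ⟨w, hwrange⟩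
  refine ⟨(e.symm wr : (Kᗮ : Submodule ℝ (EuclideanSpace ℝ (Fin n)))), ?_, ?_⟩
  · have h4 : (↑(e (e.symm wr)) : EuclideanSpace ℝ (Fin n)) = φ (e.symm wr) :=
      LinearEquiv.ofInjective_apply φ (e.symm wr)
    rw [e.apply_symm_apply] at h4
    exact h4.symm
  · have hb2 : ‖ψ wr‖ ≤ ‖ψ‖ * ‖wr‖ := ψ.le_opNorm wr
    have : ψ wr = e.symm wr := rfl
    rw [this] at hb2
    calc ‖((e.symm wr : (Kᗮ : Submodule ℝ (EuclideanSpace ℝ (Fin n)))) : EuclideanSpace ℝ (Fin n))‖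
        = ‖e.symm wr‖ := Submodule.norm_coe _
      _ ≤ ‖ψ‖ * ‖wr‖ := hb2
      _ ≤ (‖ψ‖ + 1) * ‖w‖ := by
          have : ‖wr‖ = ‖w‖ := rfl
          rw [this]
          have := norm_nonneg w
          nlinarith [norm_nonneg ψ]

/-- If an affine system has no solution, the residual is bounded below. -/
lemma gap_E (L : EuclideanSpace ℝ (Fin n) →ₗ[ℝ] EuclideanSpace ℝ (Fin n))
    (t : EuclideanSpace ℝ (Fin n)) (h : ¬ ∃ y, L y + t = 0) :
    ∃ δ : ℝ, 0 < δ ∧ ∀ x, δ ≤ ‖L x + t‖ := by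
  have hcl : IsClosed (LinearMap.range L : Set (EuclideanSpace ℝ (Fin n))) :=
    Submodule.closed_of_finiteDimensional _
  have hne : (LinearMap.range L : Set (EuclideanSpace ℝ (Fin n))).Nonempty :=
    ⟨0, Submodule.zero_mem _⟩
  have hnm : (-t) ∉ (LinearMap.range L : Set (EuclideanSpace ℝ (Fin n))) := by
    intro ⟨y, hy⟩
    exact h ⟨y, by rw [hy]; exact neg_add_cancel t⟩
  have hpos : 0 < infDist (-t) (LinearMap.range L : Set (EuclideanSpace ℝ (Fin n))) :=
    (hcl.notMem_iff_infDist_pos hne).mp hnm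
  refine ⟨_, hpos, fun x => ?_⟩
  have : dist (-t) (L x) = ‖L x + t‖ := by
    rw [dist_eq_norm]; rw [← norm_neg]; congr 1; abel
  rw [← this]
  exact infDist_le_dist_of_mem ⟨x, rfl⟩

noncomputable def liftE (L : (Fin n → ℝ) →ₗ[ℝ] (Fin n → ℝ)) :
    EuclideanSpace ℝ (Fin n) →ₗ[ℝ] EuclideanSpace ℝ (Fin n) :=
  (toE.toLinearMap.comp L).comp (toE.symm.toLinearMap)

lemma liftE_apply (L : (Fin n → ℝ) →ₗ[ℝ] (Fin n → ℝ)) (v : Fin n → ℝ) :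
    liftE L (toE v) = toE (L v) := by
  simp [liftE]

lemma hoffman_pi (L : (Fin n → ℝ) →ₗ[ℝ] (Fin n → ℝ)) :
    ∃ τ : ℝ, 0 < τ ∧ ∀ w : Fin n → ℝ, (∃ v0, L v0 = w) →
      ∃ v, L v = w ∧ vnorm v ≤ τ * vnorm w := by
  obtain ⟨τ, hτ, hH⟩ := hoffman_E (liftE L)
  refine ⟨τ, hτ, fun w ⟨v0, hv0⟩ => ?_⟩
  obtain ⟨v', hv', hb⟩ := hH (toE w) ⟨toE v0, by rw [liftE_apply, hv0]⟩
  refine ⟨toE.symm v', ?_, ?_⟩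
  · have : liftE L (toE (toE.symm v')) = toE (L (toE.symm v')) := liftE_apply L _
    rw [LinearEquiv.apply_symm_apply] at this
    rw [this] at hv'
    exact toE.injective hv'
  · rw [vnorm_eq_norm, vnorm_eq_norm, LinearEquiv.apply_symm_apply]
    exact hb

lemma gap_pi (L : (Fin n → ℝ) →ₗ[ℝ] (Fin n → ℝ)) (t : Fin n → ℝ)
    (h : ¬ ∃ y, L y + t = 0) :
    ∃ δ : ℝ, 0 < δ ∧ ∀ x, δ ≤ vnorm (L x + t) := by
  obtain ⟨δ, hδ, hg⟩ := gap_E (liftE L) (toE t) (by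
    intro ⟨y, hy⟩
    refine h ⟨toE.symm y, ?_⟩
    have h2 : liftE L (toE (toE.symm y)) = toE (L (toE.symm y)) := liftE_apply L _
    rw [LinearEquiv.apply_symm_apply] at h2
    rw [h2] at hy
    rw [← map_add] at hy
    exact toE.injective (a₂ := 0) (by rw [hy]; exact (map_zero _).symm))
  refine ⟨δ, hδ, fun x => ?_⟩
  have := hg (toE x)
  rw [vnorm_eq_norm, map_add, ← liftE_apply]
  exact this

lemma matbound (Q : Matrix (Fin n) (Fin n) ℝ) :
    ∃ Cq : ℝ, 0 ≤ Cq ∧ ∀ h : Fin n → ℝ, vnorm (Q *ᵥ h) ≤ Cq * vnorm h := by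
  set CL := LinearMap.toContinuousLinearMap (liftE (Matrix.mulVecLin Q))
  refine ⟨‖CL‖, norm_nonneg _, fun h => ?_⟩
  have h1 : toE (Q *ᵥ h) = CL (toE h) := by
    have := liftE_apply (Matrix.mulVecLin Q) h
    simp only [CL, LinearMap.coe_toContinuousLinearMap']
    rw [this]
    simp [Matrix.mulVecLin]
  rw [vnorm_eq_norm, vnorm_eq_norm, h1]
  exact CL.le_opNorm _
end hoffman

section QP
variable {n : ℕ}

lemma qsym (Q : Matrix (Fin n) (Fin n) ℝ) (hQ : Q.IsSymm) (v w : Fin n → ℝ) :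
    v ⬝ᵥ Q *ᵥ w = w ⬝ᵥ Q *ᵥ v := by
  rw [Matrix.dotProduct_mulVec v Q w, ← Matrix.mulVec_transpose, hQ, dotProduct_comm]

lemma qf_expand (Q : Matrix (Fin n) (Fin n) ℝ) (hQ : Q.IsSymm) (r : Fin n → ℝ) (x h : Fin n → ℝ) :
    qf Q r (x + h) = qf Q r x + (Q *ᵥ x + r) ⬝ᵥ h + (1/2) * (h ⬝ᵥ Q *ᵥ h) := by
  unfold qf
  have h1 : (x+h) ⬝ᵥ Q *ᵥ (x+h) = x ⬝ᵥ Q *ᵥ x + 2*(h ⬝ᵥ Q *ᵥ x) + h ⬝ᵥ Q *ᵥ h := by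
    rw [Matrix.mulVec_add, dotProduct_add, add_dotProduct, add_dotProduct,
      qsym Q hQ x h]
    ring
  have h2 : r ⬝ᵥ (x + h) = r ⬝ᵥ x + r ⬝ᵥ h := dotProduct_add r x h
  have h3 : (Q *ᵥ x + r) ⬝ᵥ h = h ⬝ᵥ Q *ᵥ x + r ⬝ᵥ h := by
    rw [add_dotProduct, dotProduct_comm]
  rw [h1, h2, h3]
  ring

lemma alpha_zero {α β ε : ℝ} (hβ : 0 < β) (hε : 0 < ε)
    (h : ∀ t : ℝ, |t| ≤ ε → 0 ≤ t * α + t^2 * β) : α = 0 := by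
  by_contra hα
  have habs : 0 < |α| := abs_pos.mpr hα
  set t := min ε (|α|/(2*β)) with ht
  have htpos : 0 < t := lt_min hε (by positivity)
  have h1 := h t (by rw [abs_of_pos htpos]; exact min_le_left _ _)
  have h2 := h (-t) (by rw [abs_neg, abs_of_pos htpos]; exact min_le_left _ _)
  have hle : t ≤ |α|/(2*β) := min_le_right _ _
  have hα1 : -(t*β) ≤ α := by nlinarith
  have hα2 : α ≤ t*β := by nlinarith
  have h4 : |α| ≤ t * β := abs_le.mpr ⟨hα1, hα2⟩
  have h6 : |α| / (2*β) * β = |α|/2 := by field_simp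
  nlinarith [mul_le_mul_of_nonneg_right hle hβ.le]

/-- KKT condition for a free coordinate of the PPA subproblem. -/
lemma kkt (l u : Fin n → EReal)
    (Q : Matrix (Fin n) (Fin n) ℝ) (hQ : Q.IsSymm) (r : Fin n → ℝ)
    (γ : ℝ) (hγ : 0 < γ)
    (hpd : (Q + γ • (1 : Matrix (Fin n) (Fin n) ℝ)).PosDef)
    (x : ℕ → Fin n → ℝ) (hmem : ∀ k, inBox l u (x k))
    (hppa : ∀ k, ∀ z, inBox l u z →
      qf Q r (x (k + 1)) + γ / 2 * vnorm (x (k + 1) - x k) ^ 2 ≤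
        qf Q r z + γ / 2 * vnorm (z - x k) ^ 2)
    (k : ℕ) (j : Fin n)
    (hlj : l j < (x (k+1) j : EReal)) (huj : ((x (k+1) j : EReal)) < u j) :
    (Q *ᵥ x (k+1) + r) j = -(γ * (x (k+1) j - x k j)) := by
  classical
  set y := x (k+1) with hy
  have hlow : ∃ a : ℝ, 0 < a ∧ ∀ t : ℝ, |t| ≤ a → l j ≤ ((y j + t : ℝ) : EReal) := by
    by_cases hbot : l j = ⊥
    · exact ⟨1, one_pos, fun t _ => hbot ▸ bot_le⟩
    · have htop : l j ≠ ⊤ := hlj.ne_top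
      have hco : l j = (((l j).toReal : ℝ) : EReal) := (EReal.coe_toReal htop hbot).symm
      have hlt : (l j).toReal < y j := by
        rw [hco] at hlj; exact_mod_cast hlj
      refine ⟨y j - (l j).toReal, by linarith, fun t ht => ?_⟩
      rw [hco]
      have := abs_le.mp ht
      exact_mod_cast (by linarith : (l j).toReal ≤ y j + t)
  have hupp : ∃ a : ℝ, 0 < a ∧ ∀ t : ℝ, |t| ≤ a → ((y j + t : ℝ) : EReal) ≤ u j := by
    by_cases htop' : u j = ⊤
    · exact ⟨1, one_pos, fun t _ => htop' ▸ le_top⟩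
    · have hbot' : u j ≠ ⊥ := huj.ne_bot
      have hco : u j = (((u j).toReal : ℝ) : EReal) := (EReal.coe_toReal htop' hbot').symm
      have hlt : y j < (u j).toReal := by
        rw [hco] at huj; exact_mod_cast huj
      refine ⟨(u j).toReal - y j, by linarith, fun t ht => ?_⟩
      rw [hco]
      have := abs_le.mp ht
      exact_mod_cast (by linarith : y j + t ≤ (u j).toReal)
  obtain ⟨a, ha, hla⟩ := hlow
  obtain ⟨b, hb, hub⟩ := hupp
  set ε := min a b with hε
  have hεpos : 0 < ε := lt_min ha hb
  set s : Fin n → ℝ := Pi.single j 1 with hs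
  have hfeas : ∀ t : ℝ, |t| ≤ ε → inBox l u (y + t • s) := by
    intro t ht i
    by_cases hij : i = j
    · subst hij
      have happ : (y + t • s) i = y i + t := by
        simp [hs, Pi.single_eq_same]
      rw [happ]
      exact ⟨hla t (le_trans ht (min_le_left _ _)), hub t (le_trans ht (min_le_right _ _))⟩
    · have happ : (y + t • s) i = y i := by
        simp [hs, Pi.single_eq_of_ne hij]
      rw [happ]
      exact hmem (k+1) i
  set g : Fin n → ℝ := Q *ᵥ y + r with hg
  set e : Fin n → ℝ := y - x k with he
  have key : ∀ t : ℝ, |t| ≤ ε → 0 ≤ t * (g j + γ * e j) + t^2 * ((Q j j + γ)/2) := by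
    intro t ht
    have hineq := hppa k (y + t • s) (hfeas t ht)
    have hq : qf Q r (y + t • s) = qf Q r y + t * g j + t^2 * (Q j j) * (1/2) := by
      rw [qf_expand Q hQ r y (t • s)]
      have h1 : g ⬝ᵥ (t • s) = t * g j := by
        rw [dotProduct_smul, hs, dotProduct_single]
        simp [smul_eq_mul]
      have h2 : (t • s) ⬝ᵥ Q *ᵥ (t • s) = t^2 * Q j j := by
        rw [smul_dotProduct, Matrix.mulVec_smul, dotProduct_smul,
          hs, single_dotProduct, Matrix.mulVec_single]
        simp [smul_eq_mul]; ring
      rw [h1, h2]; ring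
    have hv : vnorm (y + t • s - x k) ^ 2 = vnorm e ^ 2 + 2 * t * e j + t^2 := by
      have hrw : y + t • s - x k = e + t • s := by
        rw [he]; abel
      have hes : e ⬝ᵥ (t • s) = t * e j := by
        rw [dotProduct_smul, hs, dotProduct_single]
        simp [smul_eq_mul]
      have hse : (t • s) ⬝ᵥ e = t * e j := by
        rw [smul_dotProduct, hs, single_dotProduct]
        simp [smul_eq_mul]
      have hss2 : (t • s) ⬝ᵥ (t • s) = t^2 := by
        rw [smul_dotProduct, dotProduct_smul, hs, single_dotProduct,
          Pi.single_eq_same]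
        simp [smul_eq_mul]
        ring
      rw [hrw, vnorm_sq, vnorm_sq, dotProduct_add, add_dotProduct,
        add_dotProduct, hes, hse, hss2]
      ring
    rw [hq, hv] at hineq
    nlinarith [hineq]
  have hdiag : 0 < (Q j j + γ)/2 := by
    have hne : (Pi.single j 1 : Fin n → ℝ) ≠ 0 := by
      intro h0; have := congrFun h0 j; simp [Pi.single_eq_same] at this
    have := hpd.dotProduct_mulVec_pos (x := (Pi.single j (1:ℝ))) hne
    rw [star_trivial] at this
    have hcomp : (Pi.single j 1 : Fin n → ℝ) ⬝ᵥ (Q + γ • (1 : Matrix (Fin n) (Fin n) ℝ)) *ᵥ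
        (Pi.single j 1 : Fin n → ℝ) = Q j j + γ := by
      rw [Matrix.mulVec_single, single_dotProduct]
      simp [Matrix.add_apply, Matrix.smul_apply, Matrix.one_apply_eq]
    rw [hcomp] at this
    linarith
  have hzero := alpha_zero hdiag hεpos key
  have hej : e j = x (k+1) j - x k j := rfl
  rw [hej] at hzero
  linarith
end QP

section patterns
variable {n : ℕ}

def bval (l u : Fin n → EReal) (p : Fin n → Fin 3) (j : Fin n) : ℝ :=
  if p j = 0 then (l j).toReal else (u j).toReal

noncomputable def Lsys (Q : Matrix (Fin n) (Fin n) ℝ) (p : Fin n → Fin 3) :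
    (Fin n → ℝ) →ₗ[ℝ] (Fin n → ℝ) where
  toFun y := fun j => if p j = 2 then (Q *ᵥ y) j else y j
  map_add' a b := by
    funext j; by_cases h : p j = 2 <;> simp [h, Matrix.mulVec_add]
  map_smul' c a := by
    funext j; by_cases h : p j = 2 <;> simp [h, Matrix.mulVec_smul]

def tsys (l u : Fin n → EReal) (r : Fin n → ℝ) (p : Fin n → Fin 3) (j : Fin n) : ℝ :=
  if p j = 2 then r j else -(bval l u p j)

noncomputable def Rsys (l u : Fin n → EReal) (Q : Matrix (Fin n) (Fin n) ℝ) (r : Fin n → ℝ)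
    (p : Fin n → Fin 3) (y : Fin n → ℝ) : Fin n → ℝ :=
  fun j => if p j = 2 then (Q *ᵥ y + r) j else y j - bval l u p j

lemma Rsys_eq (l u : Fin n → EReal) (Q : Matrix (Fin n) (Fin n) ℝ) (r : Fin n → ℝ)
    (p : Fin n → Fin 3) (y : Fin n → ℝ) :
    Rsys l u Q r p y = Lsys Q p y + tsys l u r p := by
  funext j
  by_cases h : p j = 2 <;> simp [Rsys, Lsys, tsys, h, sub_eq_add_neg]

lemma qconst (l u : Fin n → EReal) (Q : Matrix (Fin n) (Fin n) ℝ) (hQ : Q.IsSymm)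
    (r : Fin n → ℝ) (p : Fin n → Fin 3) {z z' : Fin n → ℝ}
    (hz : Rsys l u Q r p z = 0) (hz' : Rsys l u Q r p z' = 0) :
    qf Q r z' = qf Q r z := by
  have hzz : z' = z + (z' - z) := by abel
  rw [hzz, qf_expand Q hQ r z (z' - z)]
  have hb : ∀ j, p j ≠ 2 → (z' - z) j = 0 := by
    intro j hj
    have h1 := congrFun hz j
    have h2 := congrFun hz' j
    simp only [Rsys, if_neg hj, Pi.zero_apply] at h1 h2
    simp only [Pi.sub_apply]
    linarith
  have hf : ∀ j, p j = 2 → (Q *ᵥ z + r) j = 0 ∧ (Q *ᵥ z' + r) j = 0 := by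
    intro j hj
    have h1 := congrFun hz j
    have h2 := congrFun hz' j
    simp only [Rsys, if_pos hj, Pi.zero_apply] at h1 h2
    exact ⟨h1, h2⟩
  have hterm1 : (Q *ᵥ z + r) ⬝ᵥ (z' - z) = 0 := by
    apply Finset.sum_eq_zero
    intro j _
    by_cases hj : p j = 2
    · rw [(hf j hj).1, zero_mul]
    · rw [hb j hj, mul_zero]
  have hterm2 : (z' - z) ⬝ᵥ Q *ᵥ (z' - z) = 0 := by
    apply Finset.sum_eq_zero
    intro j _
    by_cases hj : p j = 2
    · have : (Q *ᵥ (z' - z)) j = 0 := by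
        rw [Matrix.mulVec_sub]
        have h5 := (hf j hj).1
        have h6 := (hf j hj).2
        simp only [Pi.sub_apply]
        simp only [Pi.add_apply] at h5 h6
        linarith
      rw [this, mul_zero]
    · rw [hb j hj, zero_mul]
  rw [hterm1, hterm2]
  ring
end patterns

set_option maxHeartbeats 2000000 in
/-- Theorem 3.5: a PPA sequence for `min_{x ∈ Ω} q(x)`, with `q` bounded below on
`Ω`, is bounded. -/
theorem ppa_sequence_bounded {n : ℕ} (hn : 1 ≤ n)
    (l u : Fin n → EReal)
    (hl : ∀ j, l j ≠ ⊤) (hu : ∀ j, u j ≠ ⊥) (hlu : ∀ j, l j < u j)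
    (Q : Matrix (Fin n) (Fin n) ℝ) (hQ : Q.IsSymm) (r : Fin n → ℝ)
    (γ : ℝ) (hγ : 0 < γ)
    (hpd : (Q + γ • (1 : Matrix (Fin n) (Fin n) ℝ)).PosDef)
    (hbdd : ∃ B : ℝ, ∀ z, inBox l u z → B ≤ qf Q r z)
    (x : ℕ → Fin n → ℝ) (hmem : ∀ k, inBox l u (x k))
    (hppa : ∀ k, ∀ z, inBox l u z →
      qf Q r (x (k + 1)) + γ / 2 * vnorm (x (k + 1) - x k) ^ 2 ≤
        qf Q r z + γ / 2 * vnorm (z - x k) ^ 2) :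
    ∃ M : ℝ, 0 < M ∧ ∀ k, vnorm (x k) ≤ M := by
  classical
  obtain ⟨B, hB⟩ := hbdd
  obtain ⟨d, hd⟩ : ∃ d : ℕ → ℝ, d = fun k => vnorm (x (k+1) - x k) := ⟨_, rfl⟩
  have hd0 : ∀ k, 0 ≤ d k := fun k => by rw [hd]; exact vnorm_nonneg _
  -- decrease
  have hdec : ∀ k, qf Q r (x (k+1)) + γ/2 * (d k)^2 ≤ qf Q r (x k) := by
    intro k
    have h0 := hppa k (x k) (hmem k)
    have hzero : vnorm (x k - x k) = 0 := by
      rw [sub_self]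
      unfold vnorm
      rw [zero_dotProduct, Real.sqrt_zero]
    rw [hzero] at h0
    rw [hd]
    simpa using h0
  obtain ⟨qseq, hqseq⟩ : ∃ qseq : ℕ → ℝ, qseq = fun k => qf Q r (x k) := ⟨_, rfl⟩
  have hanti : Antitone qseq := by
    apply antitone_nat_of_succ_le
    intro k
    have := hdec k
    have h2 : 0 ≤ γ/2 * (d k)^2 := by positivity
    simp only [hqseq]
    linarith
  have hbb : BddBelow (Set.range qseq) :=
    ⟨B, fun y ⟨k, hk⟩ => hk ▸ (by rw [hqseq]; exact hB (x k) (hmem k))⟩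
  obtain ⟨qstar, hqstar⟩ : ∃ qstar : ℝ, qstar = ⨅ k, qseq k := ⟨_, rfl⟩
  have htend : Tendsto qseq atTop (𝓝 qstar) := hqstar ▸ tendsto_atTop_ciInf hanti hbb
  have hqge : ∀ k, qstar ≤ qseq k := fun k => hqstar ▸ ciInf_le hbb k
  obtain ⟨δ, hδ⟩ : ∃ δ : ℕ → ℝ, δ = fun k => qseq k - qstar := ⟨_, rfl⟩
  have hδ0 : ∀ k, 0 ≤ δ k := fun k => by rw [hδ]; simp; exact hqge k
  have hδtend : Tendsto δ atTop (𝓝 0) := by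
    rw [hδ]
    have := htend.sub_const qstar
    simpa using this
  have hstep : ∀ k, γ/2 * (d k)^2 ≤ δ k - δ (k+1) := by
    intro k
    have := hdec k
    simp only [hδ, hqseq]
    linarith
  have hd2 : ∀ k, (d k)^2 ≤ (2/γ) * δ k := by
    intro k
    have h1 := hstep k
    have h2 := hδ0 (k+1)
    have h3 : γ * (d k)^2 ≤ 2 * δ k := by linarith
    rw [show (2/γ) * δ k = (2 * δ k)/γ by ring, le_div_iff₀ hγ]
    linarith
  -- patterns
  obtain ⟨Cq, hCq0, hCq⟩ := matbound Q
  set pat : ℕ → Fin n → Fin 3 := fun k j =>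
    if (x (k+1) j : EReal) = l j then 0
    else if (x (k+1) j : EReal) = u j then 1 else 2 with hpat
  have hcase : ∀ k j, (pat k j = 0 ∧ (x (k+1) j : EReal) = l j) ∨
      (pat k j = 1 ∧ (x (k+1) j : EReal) = u j) ∨
      (pat k j = 2 ∧ (x (k+1) j : EReal) ≠ l j ∧ (x (k+1) j : EReal) ≠ u j) := by
    intro k j
    simp only [hpat]
    split_ifs with h1 h2
    · exact Or.inl ⟨rfl, h1⟩
    · exact Or.inr (Or.inl ⟨rfl, h2⟩)
    · exact Or.inr (Or.inr ⟨rfl, h1, h2⟩)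
  clear_value pat
  clear hpat
  have hbnd : ∀ k j, pat k j ≠ 2 → x (k+1) j = bval l u (pat k) j := by
    intro k j hj
    rcases hcase k j with ⟨h0, he⟩ | ⟨h1, he⟩ | ⟨h2, _⟩
    · unfold bval
      rw [if_pos h0, ← he, EReal.toReal_coe]
    · unfold bval
      rw [if_neg (by rw [h1]; decide), ← he, EReal.toReal_coe]
    · exact absurd h2 hj
  have hfree : ∀ k j, pat k j = 2 →
      (Q *ᵥ x (k+1) + r) j = -(γ * (x (k+1) j - x k j)) := by
    intro k j hj
    rcases hcase k j with ⟨h0, _⟩ | ⟨h1, _⟩ | ⟨h2, hne1, hne2⟩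
    · rw [h0] at hj; exact absurd hj (by decide)
    · rw [h1] at hj; exact absurd hj (by decide)
    · exact kkt l u Q hQ r γ hγ hpd x hmem hppa k j
        (lt_of_le_of_ne (hmem (k+1) j).1 (Ne.symm hne1))
        (lt_of_le_of_ne (hmem (k+1) j).2 hne2)
  have hres : ∀ k, vnorm (Rsys l u Q r (pat k) (x (k+1))) ≤ γ * d k := by
    intro k
    have hcomp : ∀ j, |Rsys l u Q r (pat k) (x (k+1)) j| ≤ |(γ • (x (k+1) - x k)) j| := by
      intro j
      by_cases hj : pat k j = 2
      · have := hfree k j hj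
        simp only [Rsys, if_pos hj]
        rw [this]
        simp only [Pi.smul_apply, Pi.sub_apply, smul_eq_mul, abs_neg]
        exact le_refl _
      · simp only [Rsys, if_neg hj]
        rw [hbnd k j hj, sub_self, abs_zero]
        exact abs_nonneg _
    calc vnorm (Rsys l u Q r (pat k) (x (k+1))) ≤ vnorm (γ • (x (k+1) - x k)) :=
          vnorm_mono _ _ hcomp
      _ = γ * d k := by rw [hd, vnorm_smul, abs_of_pos hγ]
  -- choices per pattern
  have hysol' : ∀ p : Fin n → Fin 3, ∃ y, (∃ y0, Rsys l u Q r p y0 = 0) →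
      Rsys l u Q r p y = 0 := by
    intro p
    by_cases h : ∃ y0, Rsys l u Q r p y0 = 0
    · obtain ⟨y0, hy0⟩ := h; exact ⟨y0, fun _ => hy0⟩
    · exact ⟨0, fun hc => absurd hc h⟩
  choose ysol hysol using hysol'
  obtain ⟨cval, hcval⟩ : ∃ cval : (Fin n → Fin 3) → ℝ, cval = fun p => qf Q r (ysol p) :=
    ⟨_, rfl⟩
  choose τfun hτpos hτprop using fun p : Fin n → Fin 3 => hoffman_pi (Lsys Q p)
  have hgap' : ∀ p : Fin n → Fin 3, ∃ δp : ℝ, 0 < δp ∧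
      ((¬∃ y0, Rsys l u Q r p y0 = 0) → ∀ y, δp ≤ vnorm (Rsys l u Q r p y)) := by
    intro p
    by_cases h : ∃ y0, Rsys l u Q r p y0 = 0
    · exact ⟨1, one_pos, fun hn' => absurd h hn'⟩
    · obtain ⟨δp, hδp, hprop⟩ := gap_pi (Lsys Q p) (tsys l u r p) (by
        intro ⟨y, hy⟩
        exact h ⟨y, by rw [Rsys_eq]; exact hy⟩)
      exact ⟨δp, hδp, fun _ y => by rw [Rsys_eq]; exact hprop y⟩
  choose δfun hδpos hδgap using hgap'
  have hne3 : (Finset.univ : Finset (Fin n → Fin 3)).Nonempty := Finset.univ_nonempty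
  obtain ⟨τ, hτdef⟩ : ∃ τ : ℝ, τ = Finset.univ.sup' hne3 τfun := ⟨_, rfl⟩
  have hττ : ∀ p, τfun p ≤ τ := fun p => hτdef ▸ Finset.le_sup' τfun (Finset.mem_univ p)
  have hτ0 : 0 < τ := lt_of_lt_of_le (hτpos default) (hττ default)
  obtain ⟨δmin, hδmindef⟩ : ∃ δmin : ℝ, δmin = Finset.univ.inf' hne3 δfun := ⟨_, rfl⟩
  have hδminle : ∀ p, δmin ≤ δfun p := fun p => hδmindef ▸ Finset.inf'_le δfun (Finset.mem_univ p)
  have hδmin0 : 0 < δmin := by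
    rw [hδmindef]
    apply (Finset.lt_inf'_iff hne3).mpr
    intro p _
    exact hδpos p
  obtain ⟨C, hCdef⟩ : ∃ C : ℝ, C = γ^2*τ + Cq*τ^2*γ^2 := ⟨_, rfl⟩
  have hC0 : 0 < C := by rw [hCdef]; positivity
  -- key estimate
  have hkey : ∀ k, (∃ y0, Rsys l u Q r (pat k) y0 = 0) →
      |qf Q r (x (k+1)) - cval (pat k)| ≤ C * (d k)^2 := by
    intro k hcons
    set p := pat k with hp
    set y := x (k+1) with hy
    have hz0 : Rsys l u Q r p (ysol p) = 0 := hysol p hcons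
    have hLy : Lsys Q p (ysol p) = -(tsys l u r p) := by
      have h1 := Rsys_eq l u Q r p (ysol p)
      rw [hz0] at h1
      exact eq_neg_of_add_eq_zero_left h1.symm
    have hrange : ∃ v0, Lsys Q p v0 = Rsys l u Q r p y := by
      refine ⟨y - ysol p, ?_⟩
      rw [map_sub, hLy, Rsys_eq]
      abel
    obtain ⟨v, hLv, hvb⟩ := hτprop p (Rsys l u Q r p y) hrange
    have hzsol : Rsys l u Q r p (y - v) = 0 := by
      rw [Rsys_eq, map_sub, hLv, Rsys_eq]
      abel
    have hcz : cval p = qf Q r (y - v) := by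
      rw [hcval]
      exact (qconst l u Q hQ r p hz0 hzsol).symm
    have hexp : qf Q r (y - v) = qf Q r y + (Q *ᵥ y + r) ⬝ᵥ (-v) + (1/2) * ((-v) ⬝ᵥ Q *ᵥ (-v)) := by
      rw [show y - v = y + (-v) by abel]
      exact qf_expand Q hQ r y (-v)
    have hvn : vnorm v ≤ τ * (γ * d k) := by
      calc vnorm v ≤ τfun p * vnorm (Rsys l u Q r p y) := hvb
        _ ≤ τ * (γ * d k) := by
          apply mul_le_mul (hττ p) (hres k) (vnorm_nonneg _) hτ0.le
    have hvj : ∀ j, p j ≠ 2 → v j = 0 := by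
      intro j hj
      have h1 : (y - v) j = bval l u p j := by
        have h2 := congrFun hzsol j
        simp only [Rsys, if_neg hj, Pi.zero_apply] at h2
        linarith
      have h2 : y j = bval l u p j := hbnd k j hj
      simp only [Pi.sub_apply] at h1
      linarith
    have hG : |(Q *ᵥ y + r) ⬝ᵥ (-v)| ≤ (γ * d k) * vnorm v := by
      obtain ⟨w', hw'⟩ : ∃ w' : Fin n → ℝ,
          w' = fun j => if p j = 2 then (Q *ᵥ y + r) j else 0 := ⟨_, rfl⟩
      have hsum : (Q *ᵥ y + r) ⬝ᵥ (-v) = w' ⬝ᵥ (-v) := by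
        apply Finset.sum_congr rfl
        intro j _
        by_cases hj : p j = 2
        · simp [hw', hj]
        · simp [hw', hj, hvj j hj]
      have hw'le : vnorm w' ≤ vnorm (Rsys l u Q r p y) := by
        apply vnorm_mono
        intro j
        by_cases hj : p j = 2
        · simp [hw', Rsys, hj]
        · simp only [hw']
          simp [Rsys, hj]
      rw [hsum]
      calc |w' ⬝ᵥ (-v)| ≤ vnorm w' * vnorm (-v) := abs_dot_le _ _
        _ ≤ (γ * d k) * vnorm v := by
          rw [vnorm_neg]
          apply mul_le_mul_of_nonneg_right (le_trans hw'le (hres k)) (vnorm_nonneg _)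
    have hQh : |(-v) ⬝ᵥ Q *ᵥ (-v)| ≤ Cq * vnorm v ^ 2 := by
      calc |(-v) ⬝ᵥ Q *ᵥ (-v)| ≤ vnorm (-v) * vnorm (Q *ᵥ (-v)) := abs_dot_le _ _
        _ ≤ vnorm (-v) * (Cq * vnorm (-v)) := by
          apply mul_le_mul_of_nonneg_left (hCq _) (vnorm_nonneg _)
        _ = Cq * vnorm v ^ 2 := by rw [vnorm_neg]; ring
    have habs : |qf Q r y - cval p| ≤ (γ * d k) * vnorm v + Cq * vnorm v ^ 2 := by
      rw [hcz, hexp]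
      have h1 : qf Q r y - (qf Q r y + (Q *ᵥ y + r) ⬝ᵥ (-v) + (1/2) * ((-v) ⬝ᵥ Q *ᵥ (-v)))
          = -((Q *ᵥ y + r) ⬝ᵥ (-v)) - (1/2) * ((-v) ⬝ᵥ Q *ᵥ (-v)) := by ring
      rw [h1]
      calc |(-((Q *ᵥ y + r) ⬝ᵥ (-v))) - (1/2) * ((-v) ⬝ᵥ Q *ᵥ (-v))|
          ≤ |(-((Q *ᵥ y + r) ⬝ᵥ (-v)))| + |(1/2) * ((-v) ⬝ᵥ Q *ᵥ (-v))| := abs_sub _ _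
        _ ≤ (γ * d k) * vnorm v + Cq * vnorm v ^ 2 := by
            rw [abs_neg, abs_mul]
            have h3 : |(1/2 : ℝ)| = 1/2 := by norm_num
            rw [h3]
            nlinarith [hG, hQh, abs_nonneg ((-v) ⬝ᵥ Q *ᵥ (-v))]
    have hv2 : vnorm v ^ 2 ≤ (τ * (γ * d k))^2 :=
      pow_le_pow_left₀ (vnorm_nonneg v) hvn 2
    calc |qf Q r (x (k+1)) - cval p| = |qf Q r y - cval p| := rfl
      _ ≤ (γ * d k) * vnorm v + Cq * vnorm v ^ 2 := habs
      _ ≤ C * (d k)^2 := by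
          rw [hCdef]
          nlinarith [hvn, hv2, vnorm_nonneg v, hd0 k, mul_nonneg hγ.le (hd0 k)]
  -- d tends to 0
  have hdtend : Tendsto d atTop (𝓝 0) := by
    have h1 : Tendsto (fun k => (2/γ) * δ k) atTop (𝓝 0) := by
      simpa using hδtend.const_mul (2/γ)
    have hsq : Tendsto (fun k => (d k)^2) atTop (𝓝 0) :=
      squeeze_zero (fun k => sq_nonneg _) hd2 h1
    have h2 := (Real.continuous_sqrt.tendsto 0).comp hsq
    simp only [Function.comp_def] at h2
    rw [Real.sqrt_zero] at h2
    have h3 : (fun k => Real.sqrt ((d k)^2)) = d := by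
      funext k
      rw [Real.sqrt_sq (hd0 k)]
    rwa [h3] at h2
  -- eventual consistency
  obtain ⟨K₁, hK₁⟩ := (Metric.tendsto_atTop.mp hdtend) (δmin/γ) (div_pos hδmin0 hγ)
  have hcons : ∀ k ≥ K₁, ∃ y0, Rsys l u Q r (pat k) y0 = 0 := by
    intro k hk
    by_contra hnc
    have h1 := hδgap (pat k) hnc (x (k+1))
    have h2 := hres k
    have h3 := hδminle (pat k)
    have h4 := hK₁ k hk
    rw [Real.dist_eq, sub_zero, abs_of_nonneg (hd0 k)] at h4
    have h5 : γ * d k < δmin := by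
      rw [show δmin = γ * (δmin/γ) by field_simp]
      exact mul_lt_mul_of_pos_left h4 hγ
    linarith
  -- c values tend to qstar
  have hδq : ∀ k, δ (k+1) = qf Q r (x (k+1)) - qstar := by
    intro k
    rw [hδ, hqseq]
  have hcv : ∀ k ≥ K₁, |cval (pat k) - qstar| ≤ C * ((2/γ) * δ k) + δ (k+1) := by
    intro k hk
    have h1 := hkey k (hcons k hk)
    have h2 : |qf Q r (x (k+1)) - qstar| = δ (k+1) := by
      rw [hδq k]
      exact abs_of_nonneg (by rw [← hδq k]; exact hδ0 (k+1))
    calc |cval (pat k) - qstar|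
        = |(cval (pat k) - qf Q r (x (k+1))) + (qf Q r (x (k+1)) - qstar)| := by
          congr 1
          ring
      _ ≤ |cval (pat k) - qf Q r (x (k+1))| + |qf Q r (x (k+1)) - qstar| := abs_add_le _ _
      _ ≤ C * ((2/γ) * δ k) + δ (k+1) := by
          rw [abs_sub_comm] at h1
          have h3 : C * (d k)^2 ≤ C * ((2/γ) * δ k) :=
            mul_le_mul_of_nonneg_left (hd2 k) hC0.le
          rw [h2]
          linarith
  -- separation of values
  have hη : ∃ η : ℝ, 0 < η ∧ ∀ p : Fin n → Fin 3, cval p ≠ qstar → η ≤ |cval p - qstar| := by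
    by_cases hTne : ((Finset.univ.image cval).filter (fun s => s ≠ qstar)).Nonempty
    · refine ⟨((Finset.univ.image cval).filter (fun s => s ≠ qstar)).inf' hTne
        (fun s => |s - qstar|), ?_, ?_⟩
      · apply (Finset.lt_inf'_iff hTne).mpr
        intro s hs
        have := (Finset.mem_filter.mp hs).2
        exact abs_pos.mpr (sub_ne_zero.mpr this)
      · intro p hp
        exact Finset.inf'_le (fun s => |s - qstar|) (Finset.mem_filter.mpr
          ⟨Finset.mem_image_of_mem _ (Finset.mem_univ p), hp⟩)
    · refine ⟨1, one_pos, fun p hp => ?_⟩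
      exact absurd ⟨cval p, Finset.mem_filter.mpr
        ⟨Finset.mem_image_of_mem _ (Finset.mem_univ p), hp⟩⟩ hTne
  obtain ⟨η, hη0, hηp⟩ := hη
  -- eventually cval = qstar
  have hεtend : Tendsto (fun k => C * ((2/γ) * δ k) + δ (k+1)) atTop (𝓝 0) := by
    have h1 := (hδtend.const_mul (2/γ)).const_mul C
    rw [show C * ((2/γ) * (0:ℝ)) = 0 by ring] at h1
    have h2 : Tendsto (fun k => δ (k+1)) atTop (𝓝 0) :=
      hδtend.comp (tendsto_add_atTop_nat 1)
    have h3 := h1.add h2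
    rw [add_zero] at h3
    exact h3
  obtain ⟨K₂', hK₂'⟩ := (Metric.tendsto_atTop.mp hεtend) η hη0
  obtain ⟨K₂, hK₂a, hK₂b⟩ : ∃ K₂, K₂' ≤ K₂ ∧ K₁ ≤ K₂ :=
    ⟨max K₂' K₁, le_max_left _ _, le_max_right _ _⟩
  have hqs : ∀ k ≥ K₂, cval (pat k) = qstar := by
    intro k hk
    have h1 := hcv k (le_trans hK₂b hk)
    have h2 := hK₂' k (le_trans hK₂a hk)
    rw [Real.dist_eq, sub_zero] at h2
    by_contra hne
    have h3 := hηp (pat k) hne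
    have hnn : 0 ≤ C * ((2/γ) * δ k) + δ (k+1) := le_trans (abs_nonneg _) h1
    rw [abs_of_nonneg hnn] at h2
    linarith
  -- geometric decay
  obtain ⟨β, hβdef⟩ : ∃ β : ℝ, β = C * (2/γ) := ⟨_, rfl⟩
  have hβ0 : 0 < β := by rw [hβdef]; positivity
  obtain ⟨θ, hθdef⟩ : ∃ θ : ℝ, θ = β / (1 + β) := ⟨_, rfl⟩
  have hθ0 : 0 ≤ θ := by rw [hθdef]; positivity
  have hθ1 : θ < 1 := by
    rw [hθdef, div_lt_one (by linarith)]
    linarith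
  have hcontr : ∀ k ≥ K₂, δ (k+1) ≤ θ * δ k := by
    intro k hk
    have hc := hcons k (le_trans hK₂b hk)
    have h1 := hkey k hc
    have h2 : δ (k+1) ≤ C * (d k)^2 := by
      rw [hδq k, ← hqs k hk]
      exact le_trans (le_abs_self _) h1
    have h5 := hstep k
    have h6 := mul_le_mul_of_nonneg_left h5 (by positivity : (0:ℝ) ≤ 2/γ)
    rw [show (2/γ)*(γ/2*(d k)^2) = (d k)^2 by
      field_simp] at h6
    have h4 : C * (d k)^2 ≤ β * (δ k - δ (k+1)) := by
      have h8 := mul_le_mul_of_nonneg_left h6 hC0.le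
      rw [hβdef]
      calc C * (d k)^2 ≤ C * ((2/γ) * (δ k - δ (k+1))) := h8
        _ = C * (2/γ) * (δ k - δ (k+1)) := by ring
    have h7 : (1 + β) * δ (k+1) ≤ β * δ k := by linarith only [h2, h4]
    rw [hθdef, div_mul_eq_mul_div, le_div_iff₀ (show (0:ℝ) < 1 + β by linarith)]
    linarith only [h7]
  have hgeo : ∀ m, δ (K₂ + m) ≤ θ^m * δ K₂ := by
    intro m
    induction m with
    | zero => simp
    | succ m ih =>
      have h1 := hcontr (K₂ + m) (Nat.le_add_right _ _)
      calc δ (K₂ + (m+1)) = δ ((K₂ + m) + 1) := by rw [Nat.add_succ]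
        _ ≤ θ * δ (K₂ + m) := h1
        _ ≤ θ * (θ^m * δ K₂) := mul_le_mul_of_nonneg_left ih hθ0
        _ = θ^(m+1) * δ K₂ := by ring
  obtain ⟨ρ, hρdef⟩ : ∃ ρ : ℝ, ρ = Real.sqrt θ := ⟨_, rfl⟩
  have hρ0 : 0 ≤ ρ := by rw [hρdef]; exact Real.sqrt_nonneg _
  have hρsq : ρ^2 = θ := by rw [hρdef]; exact Real.sq_sqrt hθ0
  have hρ1 : ρ < 1 := by
    by_contra hc
    push_neg at hc
    have h1 : (1:ℝ) * 1 ≤ ρ * ρ := mul_le_mul hc hc zero_le_one (le_trans zero_le_one hc)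
    rw [show ρ * ρ = ρ^2 by ring] at h1
    linarith [h1, hθ1, hρsq.le, hρsq.ge]
  obtain ⟨A, hAdef⟩ : ∃ A : ℝ, A = Real.sqrt ((2/γ) * δ K₂) := ⟨_, rfl⟩
  have hA0 : 0 ≤ A := by rw [hAdef]; exact Real.sqrt_nonneg _
  have hAsq : A^2 = (2/γ) * δ K₂ := by
    rw [hAdef]
    exact Real.sq_sqrt (mul_nonneg (by positivity) (hδ0 K₂))
  have hdm : ∀ m, d (K₂ + m) ≤ A * ρ^m := by
    intro m
    have h2 : (d (K₂+m))^2 ≤ (2/γ) * δ (K₂+m) := hd2 _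
    have h3 : (2/γ) * δ (K₂+m) ≤ (2/γ) * (θ^m * δ K₂) :=
      mul_le_mul_of_nonneg_left (hgeo m) (by positivity)
    have hA2 : (A * ρ^m)^2 = ((2/γ) * δ K₂) * θ^m := by
      rw [mul_pow, ← pow_mul, mul_comm m 2, pow_mul, hρsq, hAsq]
    have h4 : (d (K₂+m))^2 ≤ (A * ρ^m)^2 := by
      rw [hA2]
      linarith only [h2, h3]
    have h5 := Real.sqrt_le_sqrt h4
    rwa [Real.sqrt_sq (hd0 _), Real.sqrt_sq (mul_nonneg hA0 (pow_nonneg hρ0 m))] at h5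
  have h1ρ : 0 < 1 - ρ := by linarith
  have hS : ∀ m, ∑ i ∈ Finset.range m, ρ^i ≤ 1/(1-ρ) := by
    intro m
    rw [le_div_iff₀ h1ρ]
    have hgs := geom_sum_mul ρ m
    linarith only [hgs, pow_nonneg hρ0 m]
  have hxb : ∀ m, vnorm (x (K₂+m)) ≤ vnorm (x K₂) + A * (∑ i ∈ Finset.range m, ρ^i) := by
    intro m
    induction m with
    | zero => simp
    | succ m ih =>
      have hsplit : x (K₂+(m+1)) = x (K₂+m) + (x (K₂+m+1) - x (K₂+m)) := by
        rw [Nat.add_succ]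
        abel
      have h1 : vnorm (x (K₂+(m+1))) ≤ vnorm (x (K₂+m)) + d (K₂+m) := by
        rw [hsplit, hd]
        exact vnorm_triangle _ _
      have h2 := hdm m
      rw [Finset.sum_range_succ]
      calc vnorm (x (K₂+(m+1))) ≤ vnorm (x (K₂+m)) + d (K₂+m) := h1
        _ ≤ (vnorm (x K₂) + A * (∑ i ∈ Finset.range m, ρ^i)) + A * ρ^m := by linarith
        _ = vnorm (x K₂) + A * ((∑ i ∈ Finset.range m, ρ^i) + ρ^m) := by ring
  -- final bound
  have hrne : (Finset.range (K₂+1)).Nonempty := ⟨0, Finset.mem_range.mpr (Nat.succ_pos _)⟩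
  obtain ⟨N0, hN0def⟩ : ∃ N0 : ℝ, N0 = (Finset.range (K₂+1)).sup' hrne (fun k => vnorm (x k)) :=
    ⟨_, rfl⟩
  have hN0 : ∀ k ≤ K₂, vnorm (x k) ≤ N0 := by
    intro k hk
    rw [hN0def]
    exact Finset.le_sup' (fun k => vnorm (x k)) (Finset.mem_range.mpr (Nat.lt_succ_of_le hk))
  have hN0nn : 0 ≤ N0 := le_trans (vnorm_nonneg (x 0)) (hN0 0 (Nat.zero_le _))
  have hAρ : 0 ≤ A * (1/(1-ρ)) := mul_nonneg hA0 (le_of_lt (one_div_pos.mpr h1ρ))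
  refine ⟨N0 + A * (1/(1-ρ)) + 1, by linarith, ?_⟩
  intro k
  rcases le_or_gt k K₂ with h | h
  · have h1 := hN0 k h
    linarith
  · obtain ⟨m, hm⟩ : ∃ m, k = K₂ + m := ⟨k - K₂, by omega⟩
    rw [hm]
    have h1 := hxb m
    have h2 : A * (∑ i ∈ Finset.range m, ρ^i) ≤ A * (1/(1-ρ)) :=
      mul_le_mul_of_nonneg_left (hS m) hA0
    have h3 := hN0 K₂ (le_refl _)
    linarith
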